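/- arXiv:1708.02278 — 2 statements merged into one kernel-verified Lean document; each statement's English description precedes it below -/
import Mathlib

section
/- Every T-chain is either the single-entry chain [4], or a chain of the form [3, 2, …, 2, 3] (a 3, then k ≥ 0 entries equal to 2, then a 3), or is obtained from a T-chain of length one less by one of the two operations: (prepend an entry 2 and increase the last entry by 1) or (append an entry 2 and increase the first entry by 1). -/
/-!
Encode a chain `l = [b₁, …, bᵣ]` by the product `M` of the matrices `!![bᵢ, -1; 1, 0]`. Its
determinant is `1`, its first column is the reduced numerator and denominator of `[l]`, and
reversing `l` transposes `M` up to signs. Chains with entries `≥ 2` correspond bijectively to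
coprime pairs `0 ≤ q < p` (Euclid's algorithm with ceilings), so a T-chain is determined by its
parameters; for a T-chain `(d, n, a)` the determinant and the reversal bound `0 ≤ -M₀₁ < M₀₀`
pin down the whole matrix: `M = !![d n², 1 - d n (n - a); d n a - 1, 1 - d a (n - a)]`.
Multiplying out, the two operations send a T-chain `(d, n, a)` to T-chains `(d, 2n - a, n)` and
`(d, n + a, a)`. Conversely, a T-chain `(d, n, a)` with `n ≥ 3` has `2a ≠ n`, and it is the image
of the T-chain `(d, a, 2a - n)` under the first operation if `2a > n`, and of `(d, n - a, a)` under
the second if `2a < n`; for `n = 2` it is `[4]` or `[3, 2, …, 2, 3]`.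
-/

/-- Hirzebruch–Jung continued fraction of a list of integers:
`hjcf [] = 0` (junk value), `hjcf (b :: l) = b - 1 / hjcf l`.
Since `(0 : ℚ)⁻¹ = 0`, this gives `hjcf [b] = b`, matching the recursion
`[b_r] = b_r`, `[b_1, …, b_r] = b_1 − 1/[b_2, …, b_r]`. -/
def hjcf : List ℤ → ℚ
  | [] => 0
  | b :: l => (b : ℚ) - (hjcf l)⁻¹

/-- `IsTChain l d n a` : the nonempty list `l` of integers, all ≥ 2, is a T-chain
with parameters `(d, n, a)`, i.e. its Hirzebruch–Jung continued fraction equals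
`d n² / (d n a − 1)` where `d ≥ 1`, `n ≥ 2`, `0 < a < n`, `gcd(n, a) = 1`. -/
def IsTChain (l : List ℤ) (d n a : ℤ) : Prop :=
  l ≠ [] ∧ (∀ b ∈ l, 2 ≤ b) ∧
  1 ≤ d ∧ 2 ≤ n ∧ 0 < a ∧ a < n ∧ Int.gcd n a = 1 ∧
  hjcf l = (d * n ^ 2 : ℚ) / (d * n * a - 1)

open Matrix

def hjMatrix (l : List ℤ) : Matrix (Fin 2) (Fin 2) ℤ :=
  (l.map fun b => !![b, -1; 1, 0]).prod

@[simp] lemma hjMatrix_nil : hjMatrix [] = 1 := rfl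

lemma hjMatrix_cons (b : ℤ) (l : List ℤ) :
    hjMatrix (b :: l) = !![b, -1; 1, 0] * hjMatrix l := by
  simp [hjMatrix]

lemma hjMatrix_append (l l' : List ℤ) : hjMatrix (l ++ l') = hjMatrix l * hjMatrix l' := by
  simp [hjMatrix]

@[simp] lemma hjMatrix_cons_apply_zero (b : ℤ) (l : List ℤ) (k : Fin 2) :
    hjMatrix (b :: l) 0 k = b * hjMatrix l 0 k - hjMatrix l 1 k := by
  simp [hjMatrix_cons, mul_apply, Fin.sum_univ_two, sub_eq_add_neg]

@[simp] lemma hjMatrix_cons_apply_one (b : ℤ) (l : List ℤ) (k : Fin 2) :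
    hjMatrix (b :: l) 1 k = hjMatrix l 0 k := by
  simp [hjMatrix_cons, mul_apply, Fin.sum_univ_two]

lemma hjMatrix_concat_apply_zero (l : List ℤ) (c : ℤ) (k : Fin 2) :
    hjMatrix (l ++ [c]) k 0 = c * hjMatrix l k 0 + hjMatrix l k 1 := by
  simp [hjMatrix_append, hjMatrix_cons, mul_apply, Fin.sum_univ_two, mul_comm]

lemma hjMatrix_concat_apply_one (l : List ℤ) (c : ℤ) (k : Fin 2) :
    hjMatrix (l ++ [c]) k 1 = -hjMatrix l k 0 := by
  simp [hjMatrix_append, hjMatrix_cons, mul_apply, Fin.sum_univ_two]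

lemma det_hjMatrix (l : List ℤ) : (hjMatrix l).det = 1 := by
  induction l with
  | nil => simp
  | cons b l ih => rw [hjMatrix_cons, det_mul, ih, det_fin_two_of]; ring

lemma isCoprime_hjMatrix_col_zero (l : List ℤ) :
    IsCoprime (hjMatrix l 0 0) (hjMatrix l 1 0) :=
  ⟨hjMatrix l 1 1, -hjMatrix l 0 1, by linear_combination (det_fin_two _).symm.trans (det_hjMatrix l)⟩

lemma hjMatrix_reverse (l : List ℤ) :
    hjMatrix l.reverse = !![1, 0; 0, -1] * (hjMatrix l)ᵀ * !![1, 0; 0, -1] := by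
  induction l with
  | nil => ext i j; fin_cases i <;> fin_cases j <;> simp
  | cons b l ih =>
    have hJ : !![1, 0; 0, -1] * !![b, -1; 1, 0] = !![b, -1; 1, 0]ᵀ * !![(1 : ℤ), 0; 0, -1] := by
      ext i j; fin_cases i <;> fin_cases j <;> simp [mul_apply, Fin.sum_univ_two]
    rw [List.reverse_cons, hjMatrix_append, ih, hjMatrix_cons b [], hjMatrix_nil, Matrix.mul_one,
      hjMatrix_cons, transpose_mul, Matrix.mul_assoc, hJ]
    simp only [Matrix.mul_assoc]

lemma hjMatrix_col_zero_bounds {l : List ℤ} (hl : ∀ b ∈ l, 2 ≤ b) :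
    0 ≤ hjMatrix l 1 0 ∧ hjMatrix l 1 0 < hjMatrix l 0 0 := by
  induction l with
  | nil => simp
  | cons b l ih =>
    obtain ⟨h0, h1⟩ := ih fun x hx => hl x (List.mem_cons_of_mem b hx)
    have hb := hl b List.mem_cons_self
    simp only [hjMatrix_cons_apply_zero, hjMatrix_cons_apply_one]
    constructor <;> nlinarith

lemma hjMatrix_row_zero_bounds {l : List ℤ} (hl : ∀ b ∈ l, 2 ≤ b) :
    0 ≤ -hjMatrix l 0 1 ∧ -hjMatrix l 0 1 < hjMatrix l 0 0 := by
  have := hjMatrix_col_zero_bounds (l := l.reverse) fun b hb => hl b (List.mem_reverse.mp hb)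
  simp only [hjMatrix_reverse, mul_apply, Fin.sum_univ_two, transpose_apply] at this
  simpa using this

lemma hjcf_eq_div {l : List ℤ} (hl : ∀ b ∈ l, 2 ≤ b) :
    hjcf l = hjMatrix l 0 0 / hjMatrix l 1 0 := by
  induction l with
  | nil => simp [hjcf]
  | cons b l ih =>
    have hpos : (0 : ℚ) < hjMatrix l 0 0 := by
      have := hjMatrix_col_zero_bounds fun x hx => hl x (List.mem_cons_of_mem b hx)
      exact_mod_cast this.1.trans_lt this.2
    rw [hjcf, ih fun x hx => hl x (List.mem_cons_of_mem b hx), inv_div,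
      hjMatrix_cons_apply_zero, hjMatrix_cons_apply_one]
    push_cast
    field_simp

lemma eq_of_hjMatrix_col_zero_eq {l l' : List ℤ} (hl : ∀ b ∈ l, 2 ≤ b)
    (hl' : ∀ b ∈ l', 2 ≤ b) (h0 : hjMatrix l 0 0 = hjMatrix l' 0 0)
    (h1 : hjMatrix l 1 0 = hjMatrix l' 1 0) : l = l' := by
  induction l generalizing l' with
  | nil =>
    cases l' with
    | nil => rfl
    | cons b' m' =>
      have := hjMatrix_col_zero_bounds fun x hx => hl' x (List.mem_cons_of_mem b' hx)
      rw [hjMatrix_nil, one_apply_ne one_ne_zero, hjMatrix_cons_apply_one] at h1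
      omega
  | cons b m ih =>
    cases l' with
    | nil =>
      have := hjMatrix_col_zero_bounds fun x hx => hl x (List.mem_cons_of_mem b hx)
      rw [hjMatrix_nil, one_apply_ne one_ne_zero, hjMatrix_cons_apply_one] at h1
      omega
    | cons b' m' =>
      have hm := hjMatrix_col_zero_bounds fun x hx => hl x (List.mem_cons_of_mem b hx)
      have hm' := hjMatrix_col_zero_bounds fun x hx => hl' x (List.mem_cons_of_mem b' hx)
      simp only [hjMatrix_cons_apply_zero, hjMatrix_cons_apply_one] at h0 h1
      -- `(b - b') p = q - q'` with `0 ≤ q, q' < p`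
      rw [← h1] at h0 hm'
      obtain rfl : b = b' := by
        rcases lt_trichotomy b b' with hb | hb | hb
        · nlinarith
        · exact hb
        · nlinarith
      rw [ih (fun x hx => hl x (List.mem_cons_of_mem b hx))
        (fun x hx => hl' x (List.mem_cons_of_mem b hx)) h1 (by linarith)]

lemma exists_hjMatrix_col_zero_eq {p q : ℤ} (hpq : IsCoprime p q) (hq : 0 ≤ q) (hqp : q < p) :
    ∃ l : List ℤ, (∀ b ∈ l, 2 ≤ b) ∧ hjMatrix l 0 0 = p ∧ hjMatrix l 1 0 = q := by
  rcases hq.eq_or_lt with rfl | hq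
  · obtain rfl : p = 1 := by
      rcases Int.isUnit_iff.mp (isCoprime_zero_right.mp hpq) with h | h <;> omega
    exact ⟨[], by simp, by simp, by simp⟩
  · obtain ⟨k, r, hpkr, hr0, hrq⟩ : ∃ k r, p - 1 = q * k + r ∧ 0 ≤ r ∧ r < q :=
      ⟨(p - 1) / q, (p - 1) % q, (Int.mul_ediv_add_emod _ _).symm, Int.emod_nonneg _ hq.ne',
        Int.emod_lt_of_pos _ hq⟩
    have hk : 1 ≤ k := by nlinarith
    obtain ⟨u, v, huv⟩ := hpq
    obtain ⟨l, hl, h0, h1⟩ := exists_hjMatrix_col_zero_eq (p := q) (q := q - 1 - r)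
      ⟨v + u * (k + 1), -u, by linear_combination huv - u * hpkr⟩ (by omega) (by omega)
    refine ⟨(k + 1) :: l, ?_, by rw [hjMatrix_cons_apply_zero, h0, h1]; linarith, by simp [h0]⟩
    rintro x (_ | ⟨_, hx⟩)
    exacts [by omega, hl x hx]
termination_by q.toNat
decreasing_by omega

lemma isCoprime_mul_sq_mul_sub_one (d n a : ℤ) : IsCoprime (d * n ^ 2) (d * n * a - 1) :=
  ⟨1 - d * a * (n - a), d * n * (n - a) - 1, by ring⟩

lemma mul_mul_sub_one_bounds {d n a : ℤ} (hd : 1 ≤ d) (ha : 0 < a) (han : a < n) :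
    1 ≤ d * n * a - 1 ∧ d * n * a - 1 < d * n ^ 2 := by
  have hdn : n ≤ d * n := le_mul_of_one_le_left (by omega) hd
  constructor <;> nlinarith

section TChain

variable {l : List ℤ} {d n a : ℤ}

lemma isTChain_of_hjMatrix (hl : ∀ b ∈ l, 2 ≤ b) (hd : 1 ≤ d) (ha : 0 < a)
    (han : a < n) (hna : IsCoprime n a) (h0 : hjMatrix l 0 0 = d * n ^ 2)
    (h1 : hjMatrix l 1 0 = d * n * a - 1) : IsTChain l d n a := by
  have hq := mul_mul_sub_one_bounds hd ha han
  refine ⟨?_, hl, hd, by omega, ha, han, Int.isCoprime_iff_gcd_eq_one.mp hna, ?_⟩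
  · rintro rfl
    rw [hjMatrix_nil, one_apply_ne one_ne_zero] at h1
    omega
  · rw [hjcf_eq_div hl, h0, h1]
    push_cast
    rfl

lemma IsTChain.hjMatrix_col_zero (h : IsTChain l d n a) :
    hjMatrix l 0 0 = d * n ^ 2 ∧ hjMatrix l 1 0 = d * n * a - 1 := by
  obtain ⟨hne, hl, hd, -, ha, han, -, hv⟩ := h
  have hq := mul_mul_sub_one_bounds hd ha han
  obtain ⟨b, m, rfl⟩ := List.exists_cons_of_ne_nil hne
  have hm := hjMatrix_col_zero_bounds fun x hx => hl x (List.mem_cons_of_mem b hx)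
  rw [hjcf_eq_div hl] at hv
  refine Rat.div_int_inj (by rw [hjMatrix_cons_apply_one]; omega) (by omega) ?_ ?_ (by exact_mod_cast hv)
  · exact Int.isCoprime_iff_nat_coprime.mp (isCoprime_hjMatrix_col_zero _)
  · exact Int.isCoprime_iff_nat_coprime.mp (isCoprime_mul_sq_mul_sub_one d n a)

lemma IsTChain.hjMatrix_col_one (h : IsTChain l d n a) :
    hjMatrix l 0 1 = -(d * n * (n - a) - 1) ∧ hjMatrix l 1 1 = 1 - d * a * (n - a) := by
  obtain ⟨h0, h1⟩ := h.hjMatrix_col_zero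
  obtain ⟨-, hl, hd, -, ha, han, -, -⟩ := h
  have hdet : hjMatrix l 0 0 * hjMatrix l 1 1 - hjMatrix l 0 1 * hjMatrix l 1 0 = 1 :=
    (det_fin_two _).symm.trans (det_hjMatrix l)
  rw [h0, h1] at hdet
  have hrev := hjMatrix_row_zero_bounds hl
  have hq' := mul_mul_sub_one_bounds hd (by omega : 0 < n - a) (by omega : n - a < n)
  have hdvd : d * n ^ 2 ∣ hjMatrix l 0 1 + (d * n * (n - a) - 1) :=
    (isCoprime_mul_sq_mul_sub_one d n a).dvd_of_dvd_mul_right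
      ⟨hjMatrix l 1 1 - (1 - d * a * (n - a)), by linear_combination -hdet⟩
  have h01 := Int.eq_zero_of_abs_lt_dvd hdvd (abs_lt.mpr ⟨by linarith, by linarith⟩)
  refine ⟨by linarith, ?_⟩
  have hP : d * n ^ 2 ≠ 0 := by nlinarith
  exact mul_left_cancel₀ hP (by linear_combination hdet + (d * n * a - 1) * h01)

lemma IsTChain.unique {l' : List ℤ} (h : IsTChain l d n a) (h' : IsTChain l' d n a) : l = l' :=
  eq_of_hjMatrix_col_zero_eq h.2.1 h'.2.1
    (h.hjMatrix_col_zero.1.trans h'.hjMatrix_col_zero.1.symm)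
    (h.hjMatrix_col_zero.2.trans h'.hjMatrix_col_zero.2.symm)

lemma exists_isTChain (hd : 1 ≤ d) (ha : 0 < a) (han : a < n) (hna : IsCoprime n a) :
    ∃ l, IsTChain l d n a := by
  have hq := mul_mul_sub_one_bounds hd ha han
  obtain ⟨l, hl, h0, h1⟩ :=
    exists_hjMatrix_col_zero_eq (isCoprime_mul_sq_mul_sub_one d n a) (by omega) hq.2
  exact ⟨l, isTChain_of_hjMatrix hl hd ha han hna h0 h1⟩

lemma IsTChain.two_cons_append_succ {bs : List ℤ} {c : ℤ} (h : IsTChain (bs ++ [c]) d n a) :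
    IsTChain (2 :: (bs ++ [c + 1])) d (2 * n - a) n := by
  obtain ⟨h0, h1⟩ := h.hjMatrix_col_zero
  obtain ⟨h01, h11⟩ := h.hjMatrix_col_one
  obtain ⟨-, hl, hd, -, ha, han, hna, -⟩ := h
  simp only [hjMatrix_concat_apply_zero, hjMatrix_concat_apply_one] at h0 h1 h01 h11
  have hc := hl c (by simp)
  refine isTChain_of_hjMatrix ?_ hd (by omega) (by omega) ?_ ?_ ?_
  · simp only [List.mem_cons, List.mem_append, List.not_mem_nil, or_false]
    rintro x (rfl | hx | rfl)
    exacts [le_rfl, hl x (by simp [hx]), by omega]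
  · obtain ⟨u, v, huv⟩ := Int.isCoprime_iff_gcd_eq_one.mpr hna
    exact ⟨-v, u + 2 * v, by linear_combination huv⟩
  · simp only [hjMatrix_cons_apply_zero, hjMatrix_concat_apply_zero]
    linear_combination 2 * h0 - 2 * h01 - h1 + h11
  · simp only [hjMatrix_cons_apply_one, hjMatrix_concat_apply_zero]
    linear_combination h0 - h01

lemma IsTChain.succ_cons_append_two {b : ℤ} {bs : List ℤ} (h : IsTChain (b :: bs) d n a) :
    IsTChain ((b + 1) :: (bs ++ [2])) d (n + a) a := by
  obtain ⟨h0, h1⟩ := h.hjMatrix_col_zero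
  obtain ⟨h01, h11⟩ := h.hjMatrix_col_one
  obtain ⟨-, hl, hd, -, ha, han, hna, -⟩ := h
  simp only [hjMatrix_cons_apply_zero, hjMatrix_cons_apply_one] at h0 h1 h01 h11
  have hb := hl b (by simp)
  refine isTChain_of_hjMatrix ?_ hd ha (by omega) ?_ ?_ ?_
  · simp only [List.mem_cons, List.mem_append, List.not_mem_nil, or_false]
    rintro x (rfl | hx | rfl)
    exacts [by omega, hl x (by simp [hx]), le_rfl]
  · obtain ⟨u, v, huv⟩ := Int.isCoprime_iff_gcd_eq_one.mpr hna
    exact ⟨u, v - u, by linear_combination huv⟩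
  · simp only [hjMatrix_cons_apply_zero, hjMatrix_concat_apply_zero]
    linear_combination 2 * h0 + 2 * h1 + h01 + h11
  · simp only [hjMatrix_cons_apply_one, hjMatrix_concat_apply_zero]
    linear_combination 2 * h1 + h11

end TChain

lemma hjMatrix_replicate_two_append (k : ℕ) (c : ℤ) :
    hjMatrix (List.replicate k 2 ++ [c]) 0 0 = (k + 1) * (c - 1) + 1 ∧
      hjMatrix (List.replicate k 2 ++ [c]) 1 0 = k * (c - 1) + 1 := by
  induction k with
  | zero => simp
  | succ k ih =>
    simp only [List.replicate_succ, List.cons_append, hjMatrix_cons_apply_zero,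
      hjMatrix_cons_apply_one, ih.1, ih.2]
    push_cast
    constructor <;> ring

lemma isTChain_four : IsTChain [4] 1 2 1 := by
  norm_num [IsTChain, hjcf]

lemma isTChain_three_replicate_two_three (k : ℕ) :
    IsTChain (3 :: (List.replicate k 2 ++ [3])) (k + 2) 2 1 := by
  obtain ⟨h0, h1⟩ := hjMatrix_replicate_two_append k 3
  refine isTChain_of_hjMatrix ?_ (by omega) one_pos one_lt_two isCoprime_one_right ?_ ?_
  · simp only [List.mem_cons, List.mem_append, List.mem_replicate, List.not_mem_nil, or_false]
    omega
  · rw [hjMatrix_cons_apply_zero, h0, h1]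
    ring
  · rw [hjMatrix_cons_apply_one, h0]
    ring

/-- Every T-chain is [4], or [3, 2^k, 3], or is obtained from a
T-chain of length one less by prepending a 2 and increasing the last entry by 1,
or by appending a 2 and increasing the first entry by 1. -/
theorem tchain_structure (l : List ℤ) (d n a : ℤ) (h : IsTChain l d n a) :
    l = [4] ∨
    (∃ k : ℕ, l = 3 :: (List.replicate k 2 ++ [3])) ∨
    (∃ (bs : List ℤ) (c d' n' a' : ℤ), IsTChain (bs ++ [c]) d' n' a' ∧
      l = 2 :: (bs ++ [c + 1])) ∨
    (∃ (b : ℤ) (bs : List ℤ) (d' n' a' : ℤ), IsTChain (b :: bs) d' n' a' ∧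
      l = (b + 1) :: (bs ++ [2])) := by
  have ⟨_, _, hd, hn, ha, han, hg, _⟩ := h
  obtain ⟨u, v, huv⟩ := Int.isCoprime_iff_gcd_eq_one.mpr hg
  rcases hn.eq_or_lt with rfl | hn
  · obtain rfl : a = 1 := by omega
    rcases hd.eq_or_lt with rfl | hd
    · exact Or.inl (h.unique isTChain_four)
    · refine Or.inr (Or.inl ⟨(d - 2).toNat, h.unique ?_⟩)
      convert isTChain_three_replicate_two_three (d - 2).toNat
      omega
  rcases lt_trichotomy (2 * a) n with h2a | h2a | h2a
  · obtain ⟨l', hl'⟩ := exists_isTChain hd ha (by omega : a < n - a)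
      ⟨u, u + v, by linear_combination huv⟩
    obtain ⟨b, bs, rfl⟩ := List.exists_cons_of_ne_nil hl'.1
    refine Or.inr (Or.inr (Or.inr ⟨b, bs, d, n - a, a, hl', h.unique ?_⟩))
    simpa using hl'.succ_cons_append_two
  · have := Int.eq_one_of_mul_eq_one_right ha.le
      (by linear_combination huv + u * h2a : a * (2 * u + v) = 1)
    omega
  · obtain ⟨l', hl'⟩ := exists_isTChain hd (by omega : 0 < 2 * a - n) (by omega : 2 * a - n < a)
      ⟨v + 2 * u, -u, by linear_combination huv⟩
    obtain ⟨bs, c, rfl⟩ := (List.eq_nil_or_concat' l').resolve_left hl'.1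
    refine Or.inr (Or.inr (Or.inl ⟨bs, c, d, a, 2 * a - n, hl', h.unique ?_⟩))
    simpa using hl'.two_cons_append_succ
end

section
/- For every integer s ≥ 2, the chain [2^s, 3, 2^{s−2}, s+3, s+2] (s entries 2, then a 3, then s−2 entries 2, then entries s+3 and s+2, of length r = 2s+1) has Hirzebruch–Jung continued fraction (s²+3s+1)² / ((s²+3s+1)·s(s+2) − 1); hence it is a T-chain with parameters (d, n, a) = (1, s²+3s+1, s(s+2)), and it satisfies r − d = 2s. (These are the T-chains occurring in the surfaces attaining the optimal bounds of the paper's classification theorems for Kodaira dimension 0 and 1.) -/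
/-!
Reading a Hirzebruch–Jung continued fraction from the right, every entry acts on the
fraction `p / q` of the tail by `p / q ↦ (b p - q) / p`, and a block of `k` entries `2`
acts by `p / q ↦ (p + k (p - q)) / (q + k (p - q))`. Applying this to the tail
`[s+3, s+2]`, the block `2^{s-2}`, the entry `3` and the block `2^s` in turn gives the
numerator `(s² + 3s + 1)²` and the denominator `(s² + 3s + 1) s (s + 2) - 1` on the nose.
With `n = s² + 3s + 1` and `a = s (s + 2)` one has `n - a = s + 1` and `a = (s + 1)² - 1`,
so `(n - a)² - a = 1` shows that `n` and `a` are coprime.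
-/

lemma hjcf_cons_of_eq_div {l : List ℤ} {p q : ℚ} (hp : p ≠ 0) (h : hjcf l = p / q) (b : ℤ) :
    hjcf (b :: l) = (b * p - q) / p := by
  rw [hjcf, h, inv_div]
  field_simp

lemma hjcf_replicate_two_append {l : List ℤ} {p q : ℚ} (hp : 0 < p) (hqp : q ≤ p)
    (h : hjcf l = p / q) (k : ℕ) :
    hjcf (List.replicate k 2 ++ l) = (p + k * (p - q)) / (q + k * (p - q)) := by
  induction k with
  | zero => simpa using h
  | succ k ih =>
    have hk : 0 < p + k * (p - q) := by
      have : 0 ≤ (k : ℚ) * (p - q) := mul_nonneg k.cast_nonneg (sub_nonneg.mpr hqp)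
      linarith
    rw [List.replicate_succ, List.cons_append, hjcf_cons_of_eq_div hk.ne' ih]
    push_cast
    congr 1 <;> ring

def typeIIChain (s : ℕ) : List ℤ :=
  List.replicate s 2 ++ 3 :: (List.replicate (s - 2) 2 ++ [(s : ℤ) + 3, (s : ℤ) + 2])

section typeIIChain

variable {s : ℕ}

lemma length_typeIIChain (hs : 2 ≤ s) : (typeIIChain s).length = 2 * s + 1 := by
  simp only [typeIIChain, List.length_append, List.length_replicate, List.length_cons,
    List.length_nil]
  omega

lemma two_le_of_mem_typeIIChain : ∀ b ∈ typeIIChain s, 2 ≤ b := by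
  intro b hb
  simp only [typeIIChain, List.mem_append, List.mem_cons, List.mem_replicate,
    List.not_mem_nil, or_false] at hb
  rcases hb with ⟨-, rfl⟩ | rfl | ⟨-, rfl⟩ | rfl | rfl <;> omega

lemma hjcf_typeIIChain (hs : 2 ≤ s) :
    hjcf (typeIIChain s) = ((s : ℚ) ^ 2 + 3 * s + 1) ^ 2 /
      (((s : ℚ) ^ 2 + 3 * s + 1) * ((s : ℚ) * ((s : ℚ) + 2)) - 1) := by
  have hs' : (2 : ℚ) ≤ s := by exact_mod_cast hs
  have tail : hjcf [(s : ℤ) + 3, (s : ℤ) + 2] = ((s : ℚ) ^ 2 + 5 * s + 5) / (s + 2) := by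
    simp only [hjcf, inv_zero, sub_zero]
    push_cast
    field_simp
    ring
  have inner : hjcf (List.replicate (s - 2) 2 ++ [(s : ℤ) + 3, (s : ℤ) + 2]) =
      ((s : ℚ) ^ 3 + 3 * s ^ 2 - 1) / (s ^ 3 + 2 * s ^ 2 - 4 * s - 4) := by
    rw [hjcf_replicate_two_append (by positivity) (by nlinarith) tail, Nat.cast_sub hs]
    push_cast
    congr 1 <;> ring
  have middle : hjcf (3 :: (List.replicate (s - 2) 2 ++ [(s : ℤ) + 3, (s : ℤ) + 2])) =
      (2 * (s : ℚ) ^ 3 + 7 * s ^ 2 + 4 * s + 1) / (s ^ 3 + 3 * s ^ 2 - 1) := by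
    rw [hjcf_cons_of_eq_div (by nlinarith) inner]
    push_cast
    congr 1
    ring
  rw [typeIIChain, hjcf_replicate_two_append (by nlinarith) (by nlinarith) middle]
  congr 1 <;> ring

lemma isTChain_typeIIChain (hs : 2 ≤ s) :
    IsTChain (typeIIChain s) 1 ((s : ℤ) ^ 2 + 3 * s + 1) ((s : ℤ) * ((s : ℤ) + 2)) := by
  have hs' : (2 : ℤ) ≤ s := by exact_mod_cast hs
  refine ⟨?_, two_le_of_mem_typeIIChain, le_rfl, by nlinarith, by positivity, by nlinarith,
    ?_, ?_⟩
  · simp [typeIIChain]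
  · rw [← Int.isCoprime_iff_gcd_eq_one]
    exact ⟨s + 1, -s - 2, by ring⟩
  · rw [hjcf_typeIIChain hs]
    push_cast
    ring

end typeIIChain

/-- For s ≥ 2, the chain [2^s, 3, 2^{s−2}, s+3, s+2] of length
r = 2s+1 has HJ continued fraction (s²+3s+1)² / ((s²+3s+1)·s(s+2) − 1), hence
is a T-chain with parameters (1, s²+3s+1, s(s+2)), and r − d = 2s. -/
theorem optimal_chain_typeII (s : ℕ) (hs : 2 ≤ s) :
    let c : List ℤ := List.replicate s 2 ++ 3 ::
      (List.replicate (s - 2) 2 ++ [(s : ℤ) + 3, (s : ℤ) + 2])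
    c.length = 2 * s + 1 ∧
    hjcf c = ((s : ℚ) ^ 2 + 3 * s + 1) ^ 2 /
      (((s : ℚ) ^ 2 + 3 * s + 1) * ((s : ℚ) * ((s : ℚ) + 2)) - 1) ∧
    IsTChain c 1 ((s : ℤ) ^ 2 + 3 * s + 1) ((s : ℤ) * ((s : ℤ) + 2)) ∧
    (c.length : ℤ) - 1 = 2 * s := by
  have hlen := length_typeIIChain hs
  exact ⟨hlen, hjcf_typeIIChain hs, isTChain_typeIIChain hs, by rw [typeIIChain] at hlen; omega⟩
end
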